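/- For α > 2 and an integer n ≥ 1, the function φ_n defined below satisfies, for every ξ ∈ ℝ, the four inequalities: |ξ · φ_n'(ξ)| ≤ α · φ_n(ξ); |φ_n'(ξ)| ≤ α · (1 + φ_n(ξ)); ξ² · φ_n''(ξ) ≤ α(α−1) · φ_n(ξ); and φ_n''(ξ) ≤ α(α−1) · (1 + φ_n(ξ)). -/

import Mathlib

/-- The truncated power function `φ_n`: `φ_n(ξ) = |ξ|^α` for `|ξ| ≤ n`, and
`φ_n(ξ) = n^{α−2} ( (α(α−1)/2) ξ² − α(α−2) n |ξ| + ((α−1)(α−2)/2) n² )` for `|ξ| > n`. -/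
noncomputable def phiTrunc (α : ℝ) (n : ℕ) (ξ : ℝ) : ℝ :=
  if |ξ| ≤ n then |ξ| ^ α
  else
    (n : ℝ) ^ (α - 2) *
      (α * (α - 1) / 2 * ξ ^ 2 - α * (α - 2) * n * |ξ| + (α - 1) * (α - 2) / 2 * (n : ℝ) ^ 2)



noncomputable def phiD (α : ℝ) (n : ℕ) (ξ : ℝ) : ℝ :=
  if |ξ| ≤ n then α * ξ * (ξ ^ 2) ^ (α / 2 - 1)
  else (n : ℝ) ^ (α - 2) * (α * (α - 1) * ξ - α * (α - 2) * n * Real.sign ξ)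

noncomputable def phiD2 (α : ℝ) (n : ℕ) (ξ : ℝ) : ℝ :=
  if |ξ| ≤ n then α * (α - 1) * (ξ ^ 2) ^ (α / 2 - 1)
  else (n : ℝ) ^ (α - 2) * (α * (α - 1))

lemma sq_rpow (y c : ℝ) (hy : 0 ≤ y) : (y ^ 2) ^ c = y ^ (2 * c) := by
  rw [← Real.rpow_natCast y 2, ← Real.rpow_mul hy]
  norm_num

lemma abs_sq_rpow (x c : ℝ) : (x ^ 2) ^ c = |x| ^ (2 * c) := by
  rw [← sq_abs, sq_rpow _ _ (abs_nonneg x)]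

lemma hasDerivAt_inner (α : ℝ) (hα : 2 < α) (x : ℝ) :
    HasDerivAt (fun x : ℝ => (x ^ 2) ^ (α / 2)) (α * x * (x ^ 2) ^ (α / 2 - 1)) x := by
  have h := (hasDerivAt_pow 2 x).rpow_const (p := α / 2) (Or.inr (by linarith))
  convert h using 1
  ring

lemma hasDerivAt_innerD (α : ℝ) (hα : 2 < α) (x : ℝ) :
    HasDerivAt (fun x : ℝ => α * x * (x ^ 2) ^ (α / 2 - 1))
      (α * (α - 1) * (x ^ 2) ^ (α / 2 - 1)) x := by
  rcases eq_or_ne x 0 with rfl | hx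
  · rw [hasDerivAt_iff_tendsto_slope]
    have h0 : (((0:ℝ) ^ 2) ^ (α / 2 - 1)) = 0 := by
      rw [abs_sq_rpow]
      simp only [abs_zero]
      rw [Real.zero_rpow (by linarith)]
    rw [h0, mul_zero]
    have hcont : ContinuousAt (fun z : ℝ => α * (z ^ 2) ^ (α / 2 - 1)) 0 := by
      apply ContinuousAt.mul continuousAt_const
      apply ContinuousAt.comp (g := fun y : ℝ => y ^ (α / 2 - 1))
      · simpa using Real.continuousAt_rpow_const 0 (α / 2 - 1) (Or.inr (by linarith))
      · exact (continuous_pow 2).continuousAt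
    have h2 := hcont.tendsto
    simp only [h0, mul_zero] at h2
    apply Filter.Tendsto.congr' _ (h2.mono_left nhdsWithin_le_nhds)
    filter_upwards [self_mem_nhdsWithin] with z hz
    have hz' : z ≠ 0 := hz
    rw [slope_def_field]
    field_simp
    ring
  · have hx2 : (x:ℝ) ^ 2 ≠ 0 := pow_ne_zero 2 hx
    have h1 := ((hasDerivAt_pow 2 x).rpow_const (p := α / 2 - 1) (Or.inl hx2))
    have h4 : HasDerivAt (fun x : ℝ => α * x) α x := by
      simpa using (hasDerivAt_id x).const_mul α
    have h5 := h4.mul h1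
    refine h5.congr_deriv ?_
    have hx2' : (0:ℝ) < x ^ 2 := by positivity
    have key : x ^ 2 * (x ^ 2) ^ (α / 2 - 1 - 1) = (x ^ 2) ^ (α / 2 - 1) := by
      nth_rewrite 1 [← Real.rpow_one (x ^ 2)]
      rw [← Real.rpow_add hx2']
      norm_num
    have key' : -(α * (α - 2)) * (x ^ 2 * (x ^ 2) ^ (α / 2 - 1 - 1)) =
        -(α * (α - 2)) * (x ^ 2) ^ (α / 2 - 1) := by rw [key]
    linear_combination (-1 : ℝ) * key'

section

variable {α : ℝ} {n : ℕ}

lemma corner_rpow (hα : 2 < α) (n : ℕ) : (((n:ℝ)) ^ 2) ^ (α / 2 - 1) = (n:ℝ) ^ (α - 2) := by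
  rw [sq_rpow _ _ (Nat.cast_nonneg n), show (2:ℝ) * (α / 2 - 1) = α - 2 by ring]

lemma npow_rpow (hn : 1 ≤ n) (α : ℝ) : (n:ℝ) ^ (α - 2) * (n:ℝ) ^ 2 = (n:ℝ) ^ α := by
  have h : (0:ℝ) < n := by exact_mod_cast hn
  rw [← Real.rpow_natCast (n:ℝ) 2, ← Real.rpow_add h]
  norm_num

lemma phiTrunc_eq_inner (h : |x| ≤ (n:ℝ)) : phiTrunc α n x = (x ^ 2) ^ (α / 2) := by
  rw [phiTrunc, if_pos (by exact_mod_cast h), abs_sq_rpow, show (2:ℝ) * (α / 2) = α by ring]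

lemma phiTrunc_eq_pos (hα : 2 < α) (hn : 1 ≤ n) (h : (n:ℝ) ≤ x) :
    phiTrunc α n x =
      (n : ℝ) ^ (α - 2) *
        (α * (α - 1) / 2 * x ^ 2 - α * (α - 2) * n * x + (α - 1) * (α - 2) / 2 * (n : ℝ) ^ 2) := by
  have hn0 : (0:ℝ) < n := by exact_mod_cast hn
  have hx0 : 0 ≤ x := le_trans hn0.le h
  rw [phiTrunc, abs_of_nonneg hx0]
  by_cases hc : x ≤ (n:ℝ)
  · have hxn : x = (n:ℝ) := le_antisymm hc h
    rw [if_pos (by exact_mod_cast hc), hxn]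
    rw [show (n:ℝ) ^ (α - 2) * (α * (α - 1) / 2 * (n:ℝ) ^ 2 - α * (α - 2) * n * n
        + (α - 1) * (α - 2) / 2 * (n : ℝ) ^ 2) = (n:ℝ) ^ (α - 2) * (n:ℝ) ^ 2 by ring]
    rw [npow_rpow hn]
  · rw [if_neg (by exact_mod_cast hc)]

lemma phiTrunc_eq_neg (hα : 2 < α) (hn : 1 ≤ n) (h : x ≤ -(n:ℝ)) :
    phiTrunc α n x =
      (n : ℝ) ^ (α - 2) *
        (α * (α - 1) / 2 * x ^ 2 + α * (α - 2) * n * x + (α - 1) * (α - 2) / 2 * (n : ℝ) ^ 2) := by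
  have hn0 : (0:ℝ) < n := by exact_mod_cast hn
  have hx0 : x ≤ 0 := le_trans h (by linarith)
  rw [phiTrunc, abs_of_nonpos hx0]
  by_cases hc : -x ≤ (n:ℝ)
  · have hxn : x = -(n:ℝ) := by linarith
    rw [if_pos (by exact_mod_cast hc), hxn]
    rw [show (n:ℝ) ^ (α - 2) * (α * (α - 1) / 2 * (-(n:ℝ)) ^ 2 + α * (α - 2) * n * (-(n:ℝ))
        + (α - 1) * (α - 2) / 2 * (n : ℝ) ^ 2) = (n:ℝ) ^ (α - 2) * (n:ℝ) ^ 2 by ring]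
    rw [npow_rpow hn]
    rw [show -(-(n:ℝ)) = (n:ℝ) by ring]
  · rw [if_neg (by exact_mod_cast hc)]
    ring

lemma phiD_eq_pos (hα : 2 < α) (hn : 1 ≤ n) (h : (n:ℝ) ≤ x) :
    phiD α n x = (n : ℝ) ^ (α - 2) * (α * (α - 1) * x - α * (α - 2) * n) := by
  have hn0 : (0:ℝ) < n := by exact_mod_cast hn
  have hx0 : 0 < x := lt_of_lt_of_le hn0 h
  rw [phiD]
  by_cases hc : |x| ≤ (n:ℝ)
  · have hxn : x = (n:ℝ) := le_antisymm (le_trans (le_abs_self x) hc) h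
    rw [if_pos (by exact_mod_cast hc), hxn, corner_rpow hα]
    ring
  · rw [if_neg (by exact_mod_cast hc), Real.sign_of_pos hx0]
    ring

lemma phiD_eq_neg (hα : 2 < α) (hn : 1 ≤ n) (h : x ≤ -(n:ℝ)) :
    phiD α n x = (n : ℝ) ^ (α - 2) * (α * (α - 1) * x + α * (α - 2) * n) := by
  have hn0 : (0:ℝ) < n := by exact_mod_cast hn
  have hx0 : x < 0 := lt_of_le_of_lt h (by linarith)
  rw [phiD]
  by_cases hc : |x| ≤ (n:ℝ)
  · have hax : |x| = -x := abs_of_neg hx0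
    have hxn : x = -(n:ℝ) := by
      rw [hax] at hc; linarith
    rw [if_pos (by exact_mod_cast hc), hxn]
    rw [show (-(n:ℝ)) ^ 2 = (n:ℝ) ^ 2 by ring, corner_rpow hα]
    ring
  · rw [if_neg (by exact_mod_cast hc), Real.sign_of_neg hx0]
    ring

lemma phiD2_eq_pos (hα : 2 < α) (hn : 1 ≤ n) (h : (n:ℝ) ≤ x) :
    phiD2 α n x = (n : ℝ) ^ (α - 2) * (α * (α - 1)) := by
  have hn0 : (0:ℝ) < n := by exact_mod_cast hn
  rw [phiD2]
  by_cases hc : |x| ≤ (n:ℝ)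
  · have hxn : x = (n:ℝ) := le_antisymm (le_trans (le_abs_self x) hc) h
    rw [if_pos (by exact_mod_cast hc), hxn, corner_rpow hα]
    ring
  · rw [if_neg (by exact_mod_cast hc)]

lemma phiD2_eq_neg (hα : 2 < α) (hn : 1 ≤ n) (h : x ≤ -(n:ℝ)) :
    phiD2 α n x = (n : ℝ) ^ (α - 2) * (α * (α - 1)) := by
  have hn0 : (0:ℝ) < n := by exact_mod_cast hn
  rw [phiD2]
  by_cases hc : |x| ≤ (n:ℝ)
  · have hax : |x| = -x := abs_of_neg (lt_of_le_of_lt h (by linarith))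
    have hxn : x = -(n:ℝ) := by rw [hax] at hc; linarith
    rw [if_pos (by exact_mod_cast hc), hxn]
    rw [show (-(n:ℝ)) ^ 2 = (n:ℝ) ^ 2 by ring, corner_rpow hα]
    ring
  · rw [if_neg (by exact_mod_cast hc)]

-- derivative of the quadratic pieces
lemma hasDerivAt_quad (K A B C : ℝ) (x : ℝ) :
    HasDerivAt (fun x : ℝ => K * (A * x ^ 2 + B * x + C)) (K * (2 * A * x + B)) x := by
  have h1 : HasDerivAt (fun x : ℝ => A * x ^ 2 + B * x + C) (2 * A * x + B) x := by
    have hp : HasDerivAt (fun x : ℝ => x ^ 2) (2 * x) x := by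
      simpa using hasDerivAt_pow 2 x
    have := ((hp.const_mul A).add ((hasDerivAt_id x).const_mul B)).add_const C
    refine this.congr_deriv ?_
    ring
  simpa using h1.const_mul K

lemma phiD_eq_inner (h : |x| ≤ (n:ℝ)) : phiD α n x = α * x * (x ^ 2) ^ (α / 2 - 1) := by
  rw [phiD, if_pos (by exact_mod_cast h)]

lemma phiD2_eq_inner (h : |x| ≤ (n:ℝ)) : phiD2 α n x = α * (α - 1) * (x ^ 2) ^ (α / 2 - 1) := by
  rw [phiD2, if_pos (by exact_mod_cast h)]

lemma abs_n_le (n : ℕ) : |(n:ℝ)| ≤ (n:ℝ) := by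
  rw [abs_of_nonneg (Nat.cast_nonneg n)]

lemma abs_neg_n_le (n : ℕ) : |(-(n:ℝ))| ≤ (n:ℝ) := by
  rw [abs_neg, abs_of_nonneg (Nat.cast_nonneg n)]

lemma hasDerivAt_phiTrunc (hα : 2 < α) (hn : 1 ≤ n) (ξ : ℝ) :
    HasDerivAt (phiTrunc α n) (phiD α n ξ) ξ := by
  have hn0 : (0:ℝ) < n := by exact_mod_cast hn
  rcases lt_trichotomy |ξ| (n:ℝ) with hlt | heq | hgt
  · have hev : phiTrunc α n =ᶠ[nhds ξ] fun x => (x ^ 2) ^ (α / 2) := by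
      filter_upwards [(isOpen_lt continuous_abs continuous_const).mem_nhds hlt] with x hx
      exact phiTrunc_eq_inner (le_of_lt hx)
    have h := (hasDerivAt_inner α hα ξ).congr_of_eventuallyEq hev
    rw [phiD_eq_inner hlt.le]
    exact h
  · rcases abs_eq hn0.le |>.1 heq with h1 | h1
    · subst h1
      have hs : ∀ y ∈ Set.Icc (-(n:ℝ)) (n:ℝ), phiTrunc α n y = (y ^ 2) ^ (α / 2) :=
        fun y hy => phiTrunc_eq_inner (abs_le.2 ⟨hy.1, hy.2⟩)
      have hL : HasDerivWithinAt (phiTrunc α n) (phiD α n (n:ℝ)) (Set.Icc (-(n:ℝ)) (n:ℝ)) (n:ℝ) := by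
        rw [phiD_eq_inner (abs_n_le n)]
        exact ((hasDerivAt_inner α hα (n:ℝ)).hasDerivWithinAt).congr hs
          (hs _ ⟨by linarith, le_refl _⟩)
      have ht : ∀ y ∈ Set.Ici (n:ℝ), phiTrunc α n y =
          (n:ℝ) ^ (α - 2) * (α * (α - 1) / 2 * y ^ 2 + (-(α * (α - 2) * n)) * y
            + (α - 1) * (α - 2) / 2 * (n:ℝ) ^ 2) :=
        fun y hy => (phiTrunc_eq_pos hα hn hy).trans (by ring)
      have hR : HasDerivWithinAt (phiTrunc α n) (phiD α n (n:ℝ)) (Set.Ici (n:ℝ)) (n:ℝ) := by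
        have h2 := ((hasDerivAt_quad ((n:ℝ)^(α-2)) (α*(α-1)/2) (-(α*(α-2)*n))
          ((α-1)*(α-2)/2*(n:ℝ)^2) (n:ℝ)).hasDerivWithinAt (s := Set.Ici (n:ℝ))).congr ht
          (ht _ Set.self_mem_Ici)
        have hval : (n:ℝ) ^ (α-2) * (2 * (α*(α-1)/2) * (n:ℝ) + -(α*(α-2)*n)) = phiD α n (n:ℝ) := by
          rw [phiD_eq_pos hα hn le_rfl]
          ring
        rwa [hval] at h2
      refine (hL.union hR).hasDerivAt ?_
      refine Filter.mem_of_superset (Ioi_mem_nhds (show -(n:ℝ) < (n:ℝ) by linarith)) ?_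
      intro x hx
      by_cases hxn : x ≤ (n:ℝ)
      · exact Or.inl ⟨le_of_lt hx, hxn⟩
      · exact Or.inr (le_of_not_ge hxn)
    · subst h1
      have hs : ∀ y ∈ Set.Icc (-(n:ℝ)) (n:ℝ), phiTrunc α n y = (y ^ 2) ^ (α / 2) :=
        fun y hy => phiTrunc_eq_inner (abs_le.2 ⟨hy.1, hy.2⟩)
      have hR : HasDerivWithinAt (phiTrunc α n) (phiD α n (-(n:ℝ)))
          (Set.Icc (-(n:ℝ)) (n:ℝ)) (-(n:ℝ)) := by
        rw [phiD_eq_inner (abs_neg_n_le n)]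
        exact ((hasDerivAt_inner α hα (-(n:ℝ))).hasDerivWithinAt).congr hs
          (hs _ ⟨le_refl _, by linarith⟩)
      have ht : ∀ y ∈ Set.Iic (-(n:ℝ)), phiTrunc α n y =
          (n:ℝ) ^ (α - 2) * (α * (α - 1) / 2 * y ^ 2 + (α * (α - 2) * n) * y
            + (α - 1) * (α - 2) / 2 * (n:ℝ) ^ 2) :=
        fun y hy => (phiTrunc_eq_neg hα hn hy).trans (by ring)
      have hL : HasDerivWithinAt (phiTrunc α n) (phiD α n (-(n:ℝ))) (Set.Iic (-(n:ℝ))) (-(n:ℝ)) := by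
        have h2 := ((hasDerivAt_quad ((n:ℝ)^(α-2)) (α*(α-1)/2) (α*(α-2)*n)
          ((α-1)*(α-2)/2*(n:ℝ)^2) (-(n:ℝ))).hasDerivWithinAt (s := Set.Iic (-(n:ℝ)))).congr ht
          (ht _ Set.self_mem_Iic)
        have hval : (n:ℝ) ^ (α-2) * (2 * (α*(α-1)/2) * (-(n:ℝ)) + (α*(α-2)*n)) = phiD α n (-(n:ℝ)) := by
          rw [phiD_eq_neg hα hn le_rfl]
          ring
        rwa [hval] at h2
      refine (hL.union hR).hasDerivAt ?_
      refine Filter.mem_of_superset (Iio_mem_nhds (show -(n:ℝ) < (n:ℝ) by linarith)) ?_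
      intro x hx
      by_cases hxn : x ≤ -(n:ℝ)
      · exact Or.inl hxn
      · exact Or.inr ⟨le_of_not_ge hxn, le_of_lt hx⟩
  · rcases lt_abs.1 hgt with h1 | h1
    · have hev : phiTrunc α n =ᶠ[nhds ξ] fun y =>
          (n:ℝ) ^ (α - 2) * (α * (α - 1) / 2 * y ^ 2 + (-(α * (α - 2) * n)) * y
            + (α - 1) * (α - 2) / 2 * (n:ℝ) ^ 2) := by
        filter_upwards [Ioi_mem_nhds h1] with x hx
        exact (phiTrunc_eq_pos hα hn (le_of_lt hx)).trans (by ring)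
      have h := (hasDerivAt_quad ((n:ℝ)^(α-2)) (α*(α-1)/2) (-(α*(α-2)*n))
        ((α-1)*(α-2)/2*(n:ℝ)^2) ξ).congr_of_eventuallyEq hev
      have hval : (n:ℝ) ^ (α-2) * (2 * (α*(α-1)/2) * ξ + -(α*(α-2)*n)) = phiD α n ξ := by
        rw [phiD_eq_pos hα hn (le_of_lt h1)]
        ring
      rwa [hval] at h
    · have h1' : ξ < -(n:ℝ) := by linarith
      have hev : phiTrunc α n =ᶠ[nhds ξ] fun y =>
          (n:ℝ) ^ (α - 2) * (α * (α - 1) / 2 * y ^ 2 + (α * (α - 2) * n) * y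
            + (α - 1) * (α - 2) / 2 * (n:ℝ) ^ 2) := by
        filter_upwards [Iio_mem_nhds h1'] with x hx
        exact (phiTrunc_eq_neg hα hn (le_of_lt hx)).trans (by ring)
      have h := (hasDerivAt_quad ((n:ℝ)^(α-2)) (α*(α-1)/2) (α*(α-2)*n)
        ((α-1)*(α-2)/2*(n:ℝ)^2) ξ).congr_of_eventuallyEq hev
      have hval : (n:ℝ) ^ (α-2) * (2 * (α*(α-1)/2) * ξ + (α*(α-2)*n)) = phiD α n ξ := by
        rw [phiD_eq_neg hα hn (le_of_lt h1')]
        ring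
      rwa [hval] at h

lemma hasDerivAt_lin (K A B x : ℝ) : HasDerivAt (fun x : ℝ => K * (A * x + B)) (K * A) x := by
  have h1 : HasDerivAt (fun x : ℝ => A * x + B) A x := by
    simpa using ((hasDerivAt_id x).const_mul A).add_const B
  simpa using h1.const_mul K

lemma hasDerivAt_phiD (hα : 2 < α) (hn : 1 ≤ n) (ξ : ℝ) :
    HasDerivAt (phiD α n) (phiD2 α n ξ) ξ := by
  have hn0 : (0:ℝ) < n := by exact_mod_cast hn
  rcases lt_trichotomy |ξ| (n:ℝ) with hlt | heq | hgt
  · have hev : phiD α n =ᶠ[nhds ξ] fun x => α * x * (x ^ 2) ^ (α / 2 - 1) := by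
      filter_upwards [(isOpen_lt continuous_abs continuous_const).mem_nhds hlt] with x hx
      exact phiD_eq_inner (le_of_lt hx)
    have h := (hasDerivAt_innerD α hα ξ).congr_of_eventuallyEq hev
    rw [phiD2_eq_inner hlt.le]
    exact h
  · rcases abs_eq hn0.le |>.1 heq with h1 | h1
    · subst h1
      have hs : ∀ y ∈ Set.Icc (-(n:ℝ)) (n:ℝ), phiD α n y = α * y * (y ^ 2) ^ (α / 2 - 1) :=
        fun y hy => phiD_eq_inner (abs_le.2 ⟨hy.1, hy.2⟩)
      have hL : HasDerivWithinAt (phiD α n) (phiD2 α n (n:ℝ)) (Set.Icc (-(n:ℝ)) (n:ℝ)) (n:ℝ) := by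
        rw [phiD2_eq_inner (abs_n_le n)]
        exact ((hasDerivAt_innerD α hα (n:ℝ)).hasDerivWithinAt).congr hs
          (hs _ ⟨by linarith, le_refl _⟩)
      have ht : ∀ y ∈ Set.Ici (n:ℝ), phiD α n y =
          (n:ℝ) ^ (α - 2) * ((α * (α - 1)) * y + (-(α * (α - 2) * n))) :=
        fun y hy => (phiD_eq_pos hα hn hy).trans (by ring)
      have hR : HasDerivWithinAt (phiD α n) (phiD2 α n (n:ℝ)) (Set.Ici (n:ℝ)) (n:ℝ) := by
        have h2 := ((hasDerivAt_lin ((n:ℝ)^(α-2)) (α*(α-1)) (-(α*(α-2)*n))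
          (n:ℝ)).hasDerivWithinAt (s := Set.Ici (n:ℝ))).congr ht (ht _ Set.self_mem_Ici)
        have hval : (n:ℝ) ^ (α-2) * (α*(α-1)) = phiD2 α n (n:ℝ) := by
          rw [phiD2_eq_pos hα hn le_rfl]
        rwa [hval] at h2
      refine (hL.union hR).hasDerivAt ?_
      refine Filter.mem_of_superset (Ioi_mem_nhds (show -(n:ℝ) < (n:ℝ) by linarith)) ?_
      intro x hx
      by_cases hxn : x ≤ (n:ℝ)
      · exact Or.inl ⟨le_of_lt hx, hxn⟩
      · exact Or.inr (le_of_not_ge hxn)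
    · subst h1
      have hs : ∀ y ∈ Set.Icc (-(n:ℝ)) (n:ℝ), phiD α n y = α * y * (y ^ 2) ^ (α / 2 - 1) :=
        fun y hy => phiD_eq_inner (abs_le.2 ⟨hy.1, hy.2⟩)
      have hR : HasDerivWithinAt (phiD α n) (phiD2 α n (-(n:ℝ)))
          (Set.Icc (-(n:ℝ)) (n:ℝ)) (-(n:ℝ)) := by
        rw [phiD2_eq_inner (abs_neg_n_le n)]
        exact ((hasDerivAt_innerD α hα (-(n:ℝ))).hasDerivWithinAt).congr hs
          (hs _ ⟨le_refl _, by linarith⟩)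
      have ht : ∀ y ∈ Set.Iic (-(n:ℝ)), phiD α n y =
          (n:ℝ) ^ (α - 2) * ((α * (α - 1)) * y + (α * (α - 2) * n)) :=
        fun y hy => (phiD_eq_neg hα hn hy).trans (by ring)
      have hL : HasDerivWithinAt (phiD α n) (phiD2 α n (-(n:ℝ))) (Set.Iic (-(n:ℝ))) (-(n:ℝ)) := by
        have h2 := ((hasDerivAt_lin ((n:ℝ)^(α-2)) (α*(α-1)) (α*(α-2)*n)
          (-(n:ℝ))).hasDerivWithinAt (s := Set.Iic (-(n:ℝ)))).congr ht (ht _ Set.self_mem_Iic)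
        have hval : (n:ℝ) ^ (α-2) * (α*(α-1)) = phiD2 α n (-(n:ℝ)) := by
          rw [phiD2_eq_neg hα hn le_rfl]
        rwa [hval] at h2
      refine (hL.union hR).hasDerivAt ?_
      refine Filter.mem_of_superset (Iio_mem_nhds (show -(n:ℝ) < (n:ℝ) by linarith)) ?_
      intro x hx
      by_cases hxn : x ≤ -(n:ℝ)
      · exact Or.inl hxn
      · exact Or.inr ⟨le_of_not_ge hxn, le_of_lt hx⟩
  · rcases lt_abs.1 hgt with h1 | h1
    · have hev : phiD α n =ᶠ[nhds ξ] fun y =>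
          (n:ℝ) ^ (α - 2) * ((α * (α - 1)) * y + (-(α * (α - 2) * n))) := by
        filter_upwards [Ioi_mem_nhds h1] with x hx
        exact (phiD_eq_pos hα hn (le_of_lt hx)).trans (by ring)
      have h := (hasDerivAt_lin ((n:ℝ)^(α-2)) (α*(α-1)) (-(α*(α-2)*n)) ξ).congr_of_eventuallyEq hev
      have hval : (n:ℝ) ^ (α-2) * (α*(α-1)) = phiD2 α n ξ := by
        rw [phiD2_eq_pos hα hn (le_of_lt h1)]
      rwa [hval] at h
    · have h1' : ξ < -(n:ℝ) := by linarith
      have hev : phiD α n =ᶠ[nhds ξ] fun y =>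
          (n:ℝ) ^ (α - 2) * ((α * (α - 1)) * y + (α * (α - 2) * n)) := by
        filter_upwards [Iio_mem_nhds h1'] with x hx
        exact (phiD_eq_neg hα hn (le_of_lt hx)).trans (by ring)
      have h := (hasDerivAt_lin ((n:ℝ)^(α-2)) (α*(α-1)) (α*(α-2)*n) ξ).congr_of_eventuallyEq hev
      have hval : (n:ℝ) ^ (α-2) * (α*(α-1)) = phiD2 α n ξ := by
        rw [phiD2_eq_neg hα hn (le_of_lt h1')]
      rwa [hval] at h

lemma deriv_phiTrunc (hα : 2 < α) (hn : 1 ≤ n) : deriv (phiTrunc α n) = phiD α n :=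
  funext fun ξ => (hasDerivAt_phiTrunc hα hn ξ).deriv

lemma deriv2_phiTrunc (hα : 2 < α) (hn : 1 ≤ n) : deriv (deriv (phiTrunc α n)) = phiD2 α n := by
  rw [deriv_phiTrunc hα hn]
  exact funext fun ξ => (hasDerivAt_phiD hα hn ξ).deriv

end

lemma phiTrunc_eq_abs {α : ℝ} {n : ℕ} {x : ℝ} (h : |x| ≤ (n:ℝ)) :
    phiTrunc α n x = |x| ^ α := by
  rw [phiTrunc, if_pos (by exact_mod_cast h)]

lemma bound2 {ξ D A φ : ℝ} (hξ : 1 ≤ |ξ|) (hφ : 0 ≤ φ) (hA : 0 < A)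
    (h1 : |ξ * D| ≤ A * φ) : |D| ≤ A * (1 + φ) := by
  have h2 : |D| ≤ |ξ| * |D| := le_mul_of_one_le_left (abs_nonneg D) hξ
  rw [← abs_mul] at h2
  nlinarith

lemma bound4 {ξ D2 A φ : ℝ} (hξ : 1 ≤ |ξ|) (hφ : 0 ≤ φ) (hA : 0 < A) (hD2 : 0 ≤ D2)
    (h3 : ξ ^ 2 * D2 ≤ A * φ) : D2 ≤ A * (1 + φ) := by
  have h : 1 ≤ ξ ^ 2 := by nlinarith [sq_abs ξ]
  nlinarith


set_option maxHeartbeats 1000000 in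
/-- For `α > 2`, `n ≥ 1` and every `ξ ∈ ℝ`:
`|ξ φ_n'(ξ)| ≤ α φ_n(ξ)`, `|φ_n'(ξ)| ≤ α (1 + φ_n(ξ))`,
`ξ² φ_n''(ξ) ≤ α(α−1) φ_n(ξ)` and `φ_n''(ξ) ≤ α(α−1)(1 + φ_n(ξ))`. -/
theorem stmt9 (α : ℝ) (hα : 2 < α) (n : ℕ) (hn : 1 ≤ n) (ξ : ℝ) :
    |ξ * deriv (phiTrunc α n) ξ| ≤ α * phiTrunc α n ξ ∧
      |deriv (phiTrunc α n) ξ| ≤ α * (1 + phiTrunc α n ξ) ∧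
        ξ ^ 2 * deriv (deriv (phiTrunc α n)) ξ ≤ α * (α - 1) * phiTrunc α n ξ ∧
          deriv (deriv (phiTrunc α n)) ξ ≤ α * (α - 1) * (1 + phiTrunc α n ξ) := by
  have hαpos : (0:ℝ) < α := by linarith
  have hα1 : (0:ℝ) < α * (α - 1) := by nlinarith
  have hn0 : (0:ℝ) < n := by exact_mod_cast hn
  have hN1 : (1:ℝ) ≤ n := by exact_mod_cast hn
  rw [deriv2_phiTrunc hα hn, deriv_phiTrunc hα hn]
  rcases eq_or_ne ξ 0 with rfl | hξ0
  · have h0 : |(0:ℝ)| ≤ (n:ℝ) := by simpa using hn0.le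
    rw [phiD_eq_inner h0, phiD2_eq_inner h0, phiTrunc_eq_abs h0]
    have e1 : (((0:ℝ)) ^ 2) ^ (α / 2 - 1) = 0 := by
      rw [show ((0:ℝ)) ^ 2 = 0 by ring, Real.zero_rpow (by linarith)]
    have e2 : |(0:ℝ)| ^ α = 0 := by
      rw [abs_zero, Real.zero_rpow (by linarith)]
    rw [e1, e2]
    refine ⟨by simp, by simpa using by linarith, by simp [hα1.le], by simpa using by nlinarith⟩
  by_cases hin : |ξ| ≤ (n:ℝ)
  · rw [phiD_eq_inner hin, phiD2_eq_inner hin, phiTrunc_eq_abs hin]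
    have ht0 : 0 < |ξ| := abs_pos.2 hξ0
    have hE : (ξ ^ 2) ^ (α / 2 - 1) = |ξ| ^ (α - 2) := by
      rw [abs_sq_rpow, show 2 * (α / 2 - 1) = α - 2 by ring]
    have hsq : ξ ^ 2 = |ξ| ^ 2 := (sq_abs ξ).symm
    have htt : |ξ| ^ 2 * |ξ| ^ (α - 2) = |ξ| ^ α := by
      rw [← Real.rpow_natCast |ξ| 2, ← Real.rpow_add ht0]
      norm_num
    have ht1 : |ξ| * |ξ| ^ (α - 2) = |ξ| ^ (α - 1) := by
      nth_rewrite 1 [← Real.rpow_one |ξ|]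
      rw [← Real.rpow_add ht0, show (1:ℝ) + (α - 2) = α - 1 by ring]
    have hφ0 : 0 ≤ |ξ| ^ α := Real.rpow_nonneg ht0.le α
    have hE0 : 0 ≤ |ξ| ^ (α - 2) := Real.rpow_nonneg ht0.le _
    refine ⟨?_, ?_, ?_, ?_⟩
    · have he : ξ * (α * ξ * (ξ ^ 2) ^ (α / 2 - 1)) = α * |ξ| ^ α := by
        rw [hE, show ξ * (α * ξ * |ξ| ^ (α - 2)) = α * (ξ ^ 2 * |ξ| ^ (α - 2)) by ring, hsq, htt]
      rw [he, abs_of_nonneg (by positivity)]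
    · have he : |α * ξ * (ξ ^ 2) ^ (α / 2 - 1)| = α * |ξ| ^ (α - 1) := by
        rw [hE, abs_mul, abs_mul, abs_of_nonneg hαpos.le, abs_of_nonneg hE0, mul_assoc, ht1]
      rw [he]
      rcases le_or_gt |ξ| 1 with h | h
      · have hle : |ξ| ^ (α - 1) ≤ 1 := Real.rpow_le_one ht0.le h (by linarith)
        nlinarith
      · have hle : |ξ| ^ (α - 1) ≤ |ξ| ^ α := Real.rpow_le_rpow_of_exponent_le h.le (by linarith)
        nlinarith
    · have he : ξ ^ 2 * (α * (α - 1) * (ξ ^ 2) ^ (α / 2 - 1)) = α * (α - 1) * |ξ| ^ α := by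
        rw [hE, hsq, ← htt]
        ring
      rw [he]
    · rw [hE]
      rcases le_or_gt |ξ| 1 with h | h
      · have hle : |ξ| ^ (α - 2) ≤ 1 := Real.rpow_le_one ht0.le h (by linarith)
        nlinarith
      · have hle : |ξ| ^ (α - 2) ≤ |ξ| ^ α := Real.rpow_le_rpow_of_exponent_le h.le (by linarith)
        nlinarith
  · have hgt : (n:ℝ) < |ξ| := lt_of_not_ge hin
    have hξ1 : 1 ≤ |ξ| := le_trans hN1 hgt.le
    have hK : (0:ℝ) < (n:ℝ) ^ (α - 2) := Real.rpow_pos_of_pos hn0 _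
    have hc : (0:ℝ) ≤ α * (α - 1) * (α - 2) / 2 := by nlinarith
    rcases lt_abs.1 hgt with h1 | h1
    · -- ξ > n
      have hξn : (n:ℝ) ≤ ξ := h1.le
      rw [phiD_eq_pos hα hn hξn, phiD2_eq_pos hα hn hξn, phiTrunc_eq_pos hα hn hξn]
      have hB : 0 ≤ α * (α - 1) / 2 * ξ ^ 2 - α * (α - 2) * n * ξ + (α - 1) * (α - 2) / 2 * (n:ℝ) ^ 2 := by
        nlinarith [mul_nonneg (mul_nonneg hαpos.le hn0.le) (sub_nonneg.2 hξn),
          mul_nonneg hα1.le (sq_nonneg (ξ - (n:ℝ))), sq_nonneg ((n:ℝ))]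
      have hφ : 0 ≤ (n:ℝ) ^ (α - 2) * (α * (α - 1) / 2 * ξ ^ 2 - α * (α - 2) * n * ξ
          + (α - 1) * (α - 2) / 2 * (n:ℝ) ^ 2) := mul_nonneg hK.le hB
      have hD0 : 0 ≤ α * (α - 1) * ξ - α * (α - 2) * n := by nlinarith [mul_pos hαpos hn0]
      have H1 : |ξ * ((n:ℝ) ^ (α - 2) * (α * (α - 1) * ξ - α * (α - 2) * n))| ≤
          α * ((n:ℝ) ^ (α - 2) * (α * (α - 1) / 2 * ξ ^ 2 - α * (α - 2) * n * ξ
            + (α - 1) * (α - 2) / 2 * (n:ℝ) ^ 2)) := by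
        rw [abs_of_nonneg (mul_nonneg (by linarith) (mul_nonneg hK.le hD0))]
        have key : ξ * (α * (α - 1) * ξ - α * (α - 2) * n) ≤
            α * (α * (α - 1) / 2 * ξ ^ 2 - α * (α - 2) * n * ξ
              + (α - 1) * (α - 2) / 2 * (n:ℝ) ^ 2) := by
          nlinarith [mul_nonneg hc (sq_nonneg (ξ - (n:ℝ)))]
        have h := mul_le_mul_of_nonneg_left key hK.le
        linarith [h]
      have H3 : ξ ^ 2 * ((n:ℝ) ^ (α - 2) * (α * (α - 1))) ≤
          α * (α - 1) * ((n:ℝ) ^ (α - 2) * (α * (α - 1) / 2 * ξ ^ 2 - α * (α - 2) * n * ξ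
            + (α - 1) * (α - 2) / 2 * (n:ℝ) ^ 2)) := by
        have hf1 : (0:ℝ) ≤ ξ - n := sub_nonneg.2 hξn
        have hf2 : (0:ℝ) ≤ (α + 1) * ξ - (α - 1) * n := by nlinarith
        have key : ξ ^ 2 * (α * (α - 1)) ≤
            α * (α - 1) * (α * (α - 1) / 2 * ξ ^ 2 - α * (α - 2) * n * ξ
              + (α - 1) * (α - 2) / 2 * (n:ℝ) ^ 2) := by
          nlinarith [mul_nonneg (mul_nonneg hα1.le (by linarith : (0:ℝ) ≤ (α-2)/2))
            (mul_nonneg hf1 hf2)]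
        have h := mul_le_mul_of_nonneg_left key hK.le
        linarith [h]
      exact ⟨H1, bound2 hξ1 hφ hαpos H1, H3,
        bound4 hξ1 hφ hα1 (mul_nonneg hK.le hα1.le) H3⟩
    · -- ξ < -n
      have hξn : ξ ≤ -(n:ℝ) := by linarith
      rw [phiD_eq_neg hα hn hξn, phiD2_eq_neg hα hn hξn, phiTrunc_eq_neg hα hn hξn]
      have hB : 0 ≤ α * (α - 1) / 2 * ξ ^ 2 + α * (α - 2) * n * ξ + (α - 1) * (α - 2) / 2 * (n:ℝ) ^ 2 := by
        nlinarith [mul_nonneg (mul_nonneg hαpos.le hn0.le) (by linarith : (0:ℝ) ≤ -ξ - n),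
          mul_nonneg hα1.le (sq_nonneg (ξ + (n:ℝ))), sq_nonneg ((n:ℝ))]
      have hφ : 0 ≤ (n:ℝ) ^ (α - 2) * (α * (α - 1) / 2 * ξ ^ 2 + α * (α - 2) * n * ξ
          + (α - 1) * (α - 2) / 2 * (n:ℝ) ^ 2) := mul_nonneg hK.le hB
      have hD0 : α * (α - 1) * ξ + α * (α - 2) * n ≤ 0 := by nlinarith [mul_pos hαpos hn0]
      have H1 : |ξ * ((n:ℝ) ^ (α - 2) * (α * (α - 1) * ξ + α * (α - 2) * n))| ≤
          α * ((n:ℝ) ^ (α - 2) * (α * (α - 1) / 2 * ξ ^ 2 + α * (α - 2) * n * ξ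
            + (α - 1) * (α - 2) / 2 * (n:ℝ) ^ 2)) := by
        rw [abs_of_nonneg (mul_nonneg_of_nonpos_of_nonpos (by linarith)
          (mul_nonpos_of_nonneg_of_nonpos hK.le hD0))]
        have key : ξ * (α * (α - 1) * ξ + α * (α - 2) * n) ≤
            α * (α * (α - 1) / 2 * ξ ^ 2 + α * (α - 2) * n * ξ
              + (α - 1) * (α - 2) / 2 * (n:ℝ) ^ 2) := by
          nlinarith [mul_nonneg hc (sq_nonneg (ξ + (n:ℝ)))]
        have h := mul_le_mul_of_nonneg_left key hK.le
        linarith [h]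
      have H3 : ξ ^ 2 * ((n:ℝ) ^ (α - 2) * (α * (α - 1))) ≤
          α * (α - 1) * ((n:ℝ) ^ (α - 2) * (α * (α - 1) / 2 * ξ ^ 2 + α * (α - 2) * n * ξ
            + (α - 1) * (α - 2) / 2 * (n:ℝ) ^ 2)) := by
        have hf1 : ξ + (n:ℝ) ≤ 0 := by linarith
        have hf2 : (α + 1) * ξ + (α - 1) * n ≤ 0 := by nlinarith
        have key : ξ ^ 2 * (α * (α - 1)) ≤
            α * (α - 1) * (α * (α - 1) / 2 * ξ ^ 2 + α * (α - 2) * n * ξ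
              + (α - 1) * (α - 2) / 2 * (n:ℝ) ^ 2) := by
          nlinarith [mul_nonneg (mul_nonneg hα1.le (by linarith : (0:ℝ) ≤ (α-2)/2))
            (mul_nonneg_of_nonpos_of_nonpos hf1 hf2)]
        have h := mul_le_mul_of_nonneg_left key hK.le
        linarith [h]
      exact ⟨H1, bound2 hξ1 hφ hαpos H1, H3,
        bound4 hξ1 hφ hα1 (mul_nonneg hK.le hα1.le) H3⟩
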